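/- arXiv:2508.13122 — 4 statements merged into one kernel-verified Lean document; each statement's English description precedes it below -/
import Mathlib

section
/- Let H : ℝ³ → ℂ be C³ with H(0) = 0, ∇H(0) = 0 and ‖H‖₃ < ∞. For ξ ∈ ℝ define D₁(H,ξ) = sup_{η ≠ 0} |H(η)|/(‖η‖² + ξ²). Then D₁(H,ξ) ≥ (1/57) · D₁(H,0)³ / (D₁(H,0)² + ‖H‖₃² ξ²). -/
/-!
Write `D = D₁(H,0)` and `M = ‖H‖₃`. Taylor's theorem with integral remainder gives
`‖H η‖ ≤ M ‖η‖²` (so all the suprema are finite) and, along a unit ray,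
`‖H (t • u) - t² • c‖ ≤ M t³ / 2` with `c = D²H(0)(u,u) / 2`.
Take `η = a • u` with `‖H η‖ ≥ (D/2) a²` and `r = D / (3M)`. If `r ≤ a`, the point `η` itself
shows `D₁(H,ξ) ≥ (D/2) r² / (r² + ξ²)`. If `a < r`, the bound at `a` forces
`‖c‖ ≥ D/2 - M a/2`, and then the bound at `r` gives `‖H (r • u)‖ ≥ (D/2 - M r) r² = D r² / 6`.
Either way `D₁(H,ξ) ≥ (D/6) r² / (r² + ξ²)`, which is at least `D³ / (57 (D² + M² ξ²))`.
-/

noncomputable section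
open scoped BigOperators

abbrev E3 := EuclideanSpace ℝ (Fin 3)

/-- `‖H‖₃`: supremum over all orders `≤ 3` and all points of the derivative norms. -/
def norm3 (H : E3 → ℂ) : ℝ :=
  ⨆ t : Fin 4 × E3, ‖iteratedFDeriv ℝ (t.1 : ℕ) H t.2‖

/-- The GTW-style quantity `D₁(H, ξ)`. -/
def D1 (H : E3 → ℂ) (ξ : ℝ) : ℝ :=
  ⨆ η : {η : E3 // η ≠ 0}, ‖H (η : E3)‖ / (‖(η : E3)‖ ^ 2 + ξ ^ 2)

open scoped Nat

section Ray

variable {F : Type*} [NormedAddCommGroup F] [NormedSpace ℝ F]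

theorem exists_pos_le_norm_div_sq_add_sq {g : ℝ → F} {c : F} {M q a r : ℝ} (hM : 0 ≤ M)
    (hq : 0 ≤ q) (hg : ∀ t, 0 < t → ‖g t - t ^ 2 • c‖ ≤ M * t ^ 3 / 2) (ha : 0 < a)
    (hqa : q * a ^ 2 ≤ ‖g a‖) (hr : 0 < r) (ξ : ℝ) :
    ∃ t, 0 < t ∧ (q - M * r) * r ^ 2 / (r ^ 2 + ξ ^ 2) ≤ ‖g t‖ / (t ^ 2 + ξ ^ 2) := by
  have norm_sq_smul (t : ℝ) : ‖t ^ 2 • c‖ = t ^ 2 * ‖c‖ := by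
    rw [norm_smul, Real.norm_of_nonneg (sq_nonneg t)]
  rcases le_or_gt r a with hra | har
  · refine ⟨a, ha, ?_⟩
    calc (q - M * r) * r ^ 2 / (r ^ 2 + ξ ^ 2) ≤ q * a ^ 2 / (a ^ 2 + ξ ^ 2) := by
          rw [div_le_div_iff₀ (by positivity) (by positivity)]
          have hra2 : 0 ≤ a ^ 2 - r ^ 2 := sub_nonneg.2 (pow_le_pow_left₀ hr.le hra 2)
          nlinarith [mul_nonneg hq (mul_nonneg (sq_nonneg ξ) hra2),
            mul_nonneg (mul_nonneg hM (pow_pos hr 3).le) (add_nonneg (sq_nonneg a) (sq_nonneg ξ))]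
      _ ≤ ‖g a‖ / (a ^ 2 + ξ ^ 2) := by gcongr
  · refine ⟨r, hr, ?_⟩
    have hc : q - M * a / 2 ≤ ‖c‖ := by
      have h := (norm_sub_norm_le (g a) (a ^ 2 • c)).trans (hg a ha)
      rw [norm_sq_smul] at h
      nlinarith [pow_pos ha 2, pow_pos ha 3]
    have hgr : (q - M * r) * r ^ 2 ≤ ‖g r‖ := by
      have h := (norm_sub_norm_le (r ^ 2 • c) (g r)).trans
        ((norm_sub_rev _ _).trans_le (hg r hr))
      rw [norm_sq_smul] at h
      have hc' : (q - M * r / 2) * r ^ 2 ≤ ‖c‖ * r ^ 2 :=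
        mul_le_mul_of_nonneg_right (by nlinarith) (sq_nonneg r)
      nlinarith
    gcongr

end Ray

section Taylor

variable {E F : Type*} [NormedAddCommGroup E] [NormedSpace ℝ E]
  [NormedAddCommGroup F] [NormedSpace ℝ F] [CompleteSpace F]

theorem norm_map_add_sub_sum_iteratedFDeriv_le {f : E → F} {n : ℕ} (hf : ContDiff ℝ (n + 1) f)
    {M : ℝ} (hM : ∀ z, ‖iteratedFDeriv ℝ (n + 1) f z‖ ≤ M) (x y : E) :
    ‖f (x + y) - ∑ k ∈ Finset.range (n + 1), (k ! : ℝ)⁻¹ • iteratedFDeriv ℝ k f x (fun _ ↦ y)‖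
      ≤ M * ‖y‖ ^ (n + 1) / n ! := by
  rw [map_add_eq_sum_add_integral_iteratedFDeriv (fun t _ ↦ hf.contDiffAt), add_sub_cancel_left,
    norm_smul, norm_inv, RCLike.norm_natCast, inv_mul_eq_div]
  gcongr
  have hbound : ∀ t ∈ Set.uIoc (0 : ℝ) 1,
      ‖(1 - t) ^ n • iteratedFDeriv ℝ (n + 1) f (x + t • y) (fun _ ↦ y)‖ ≤ M * ‖y‖ ^ (n + 1) := by
    intro t ht
    rw [Set.uIoc_of_le zero_le_one] at ht
    obtain ⟨ht0, ht1⟩ := ht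
    rw [norm_smul, norm_pow, Real.norm_of_nonneg (by linarith)]
    calc (1 - t) ^ n * ‖iteratedFDeriv ℝ (n + 1) f (x + t • y) (fun _ ↦ y)‖
        ≤ 1 * (M * ∏ _i : Fin (n + 1), ‖y‖) := by
          gcongr
          · exact pow_le_one₀ (by linarith) (by linarith)
          · exact ContinuousMultilinearMap.le_mul_prod_of_opNorm_le_of_le (hM _) fun _ ↦ le_rfl
      _ = M * ‖y‖ ^ (n + 1) := by simp
  simpa using intervalIntegral.norm_integral_le_of_norm_le_const hbound

variable {H : E → F} {M : ℝ}

theorem norm_le_mul_norm_sq_of_fderiv_eq_zero (hH : ContDiff ℝ 2 H) (h0 : H 0 = 0)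
    (h1 : fderiv ℝ H 0 = 0) (hM : ∀ z, ‖iteratedFDeriv ℝ 2 H z‖ ≤ M) (y : E) :
    ‖H y‖ ≤ M * ‖y‖ ^ 2 := by
  simpa [Finset.sum_range_succ, h0, h1, iteratedFDeriv_one_apply] using
    norm_map_add_sub_sum_iteratedFDeriv_le (n := 1) hH hM 0 y

theorem norm_sub_sq_smul_le_of_fderiv_eq_zero (hH : ContDiff ℝ 3 H) (h0 : H 0 = 0)
    (h1 : fderiv ℝ H 0 = 0) (hM : ∀ z, ‖iteratedFDeriv ℝ 3 H z‖ ≤ M) {u : E} (hu : ‖u‖ = 1)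
    {t : ℝ} (ht : 0 ≤ t) :
    ‖H (t • u) - t ^ 2 • (2 : ℝ)⁻¹ • iteratedFDeriv ℝ 2 H 0 (fun _ ↦ u)‖ ≤ M * t ^ 3 / 2 := by
  have hQ : iteratedFDeriv ℝ 2 H 0 (fun _ ↦ t • u) =
      t ^ 2 • iteratedFDeriv ℝ 2 H 0 (fun _ ↦ u) := by
    simpa using (iteratedFDeriv ℝ 2 H 0).map_smul_univ (fun _ ↦ t) (fun _ ↦ u)
  have h := norm_map_add_sub_sum_iteratedFDeriv_le (n := 2) hH hM 0 (t • u)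
  simp only [Finset.sum_range_succ, Finset.range_zero, Finset.sum_empty, hQ] at h
  simpa [h0, h1, iteratedFDeriv_one_apply, norm_smul, hu, abs_of_nonneg ht,
    smul_comm (t ^ 2)] using h

end Taylor

theorem norm_iteratedFDeriv_le_norm3 {H : E3 → ℂ}
    (hb : BddAbove (Set.range fun t : Fin 4 × E3 => ‖iteratedFDeriv ℝ (t.1 : ℕ) H t.2‖))
    {k : ℕ} (hk : k ≤ 3) (x : E3) : ‖iteratedFDeriv ℝ k H x‖ ≤ norm3 H :=
  le_ciSup hb (⟨k, by omega⟩, x)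

theorem D1_nonneg (H : E3 → ℂ) (ξ : ℝ) : 0 ≤ D1 H ξ :=
  Real.iSup_nonneg fun _ ↦ by positivity

section D1

variable {H : E3 → ℂ} {M : ℝ}

theorem div_le_D1 (hHM : ∀ y, ‖H y‖ ≤ M * ‖y‖ ^ 2) (ξ : ℝ) {η : E3} (hη : η ≠ 0) :
    ‖H η‖ / (‖η‖ ^ 2 + ξ ^ 2) ≤ D1 H ξ := by
  refine le_ciSup (f := fun η : {η : E3 // η ≠ 0} ↦ ‖H η‖ / (‖(η : E3)‖ ^ 2 + ξ ^ 2))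
    ⟨M, ?_⟩ ⟨η, hη⟩
  rintro _ ⟨⟨y, hy⟩, rfl⟩
  have hy2 : 0 < ‖y‖ ^ 2 := by positivity
  calc ‖H y‖ / (‖y‖ ^ 2 + ξ ^ 2) ≤ ‖H y‖ / ‖y‖ ^ 2 := by
        gcongr; exact le_add_of_nonneg_right (sq_nonneg ξ)
    _ ≤ M := (div_le_iff₀ hy2).2 (hHM y)

theorem exists_mul_norm_sq_lt_of_lt_D1 {q : ℝ} (hq : q < D1 H 0) :
    ∃ η : E3, η ≠ 0 ∧ q * ‖η‖ ^ 2 < ‖H η‖ := by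
  obtain ⟨v, hv⟩ := exists_ne (0 : E3)
  have : Nonempty {η : E3 // η ≠ 0} := ⟨⟨v, hv⟩⟩
  obtain ⟨⟨η, hη⟩, hlt⟩ := exists_lt_of_lt_ciSup hq
  refine ⟨η, hη, ?_⟩
  have hη2 : 0 < ‖η‖ ^ 2 := by positivity
  simpa [lt_div_iff₀ hη2] using hlt

theorem le_D1_of_mul_norm_sq_le (hH : ContDiff ℝ 3 H) (h0 : H 0 = 0) (h1 : fderiv ℝ H 0 = 0)
    (hM2 : ∀ z, ‖iteratedFDeriv ℝ 2 H z‖ ≤ M) (hM3 : ∀ z, ‖iteratedFDeriv ℝ 3 H z‖ ≤ M)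
    {η : E3} (hη : η ≠ 0) {q : ℝ} (hq : 0 ≤ q) (hqη : q * ‖η‖ ^ 2 ≤ ‖H η‖) {r : ℝ} (hr : 0 < r)
    (ξ : ℝ) : (q - M * r) * r ^ 2 / (r ^ 2 + ξ ^ 2) ≤ D1 H ξ := by
  have hquad := norm_le_mul_norm_sq_of_fderiv_eq_zero (hH.of_le (by norm_num)) h0 h1 hM2
  have ha : 0 < ‖η‖ := norm_pos_iff.2 hη
  set u := ‖η‖⁻¹ • η
  have hu : ‖u‖ = 1 := by rw [norm_smul, norm_inv, norm_norm, inv_mul_cancel₀ ha.ne']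
  have hηu : ‖η‖ • u = η := by rw [smul_smul, mul_inv_cancel₀ ha.ne', one_smul]
  obtain ⟨t, ht, hbound⟩ := exists_pos_le_norm_div_sq_add_sq (g := fun t ↦ H (t • u))
    ((norm_nonneg _).trans (hM2 0)) hq
    (fun t ht ↦ norm_sub_sq_smul_le_of_fderiv_eq_zero hH h0 h1 hM3 hu ht.le) ha
    (by simpa [hηu] using hqη) hr ξ
  have htu : ‖t • u‖ = t := by rw [norm_smul, hu, mul_one, Real.norm_of_nonneg ht.le]
  calc (q - M * r) * r ^ 2 / (r ^ 2 + ξ ^ 2) ≤ ‖H (t • u)‖ / (t ^ 2 + ξ ^ 2) := hbound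
    _ ≤ D1 H ξ := by
      simpa [htu] using div_le_D1 hquad ξ (η := t • u) (by rw [← norm_pos_iff, htu]; exact ht)

end D1

theorem one_div_57_mul_pow_three_le {D M r ξ : ℝ} (hM : 0 < M) (hr : 0 < r)
    (hD : 3 * M * r = D) :
    1 / 57 * D ^ 3 / (D ^ 2 + M ^ 2 * ξ ^ 2) ≤ (D / 2 - M * r) * r ^ 2 / (r ^ 2 + ξ ^ 2) := by
  subst hD
  rw [div_le_div_iff₀ (by positivity) (by positivity)]
  have hMr : 0 < M ^ 3 * r ^ 3 := by positivity
  nlinarith [mul_nonneg hMr.le (sq_nonneg ξ)]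

theorem D1_lower_bound (H : E3 → ℂ) (hH : ContDiff ℝ 3 H)
    (h0 : H 0 = 0) (h1 : fderiv ℝ H 0 = 0)
    (hb : BddAbove (Set.range fun t : Fin 4 × E3 => ‖iteratedFDeriv ℝ (t.1 : ℕ) H t.2‖))
    (ξ : ℝ) :
    D1 H ξ ≥ (1 / 57) * (D1 H 0) ^ 3 / ((D1 H 0) ^ 2 + (norm3 H) ^ 2 * ξ ^ 2) := by
  set D := D1 H 0
  set M := norm3 H
  have hM2 : ∀ z, ‖iteratedFDeriv ℝ 2 H z‖ ≤ M := norm_iteratedFDeriv_le_norm3 hb (by norm_num)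
  have hM3 : ∀ z, ‖iteratedFDeriv ℝ 3 H z‖ ≤ M := norm_iteratedFDeriv_le_norm3 hb le_rfl
  rcases (D1_nonneg H 0).eq_or_lt with hD | hD
  · rw [show D = 0 from hD.symm]
    simpa using D1_nonneg H ξ
  obtain ⟨η, hη, hqη⟩ := exists_mul_norm_sq_lt_of_lt_D1 (half_lt_self hD)
  have hM : 0 < M := by
    have hη2 : 0 < ‖η‖ ^ 2 := by positivity
    have hquad := norm_le_mul_norm_sq_of_fderiv_eq_zero (hH.of_le (by norm_num)) h0 h1 hM2 η
    nlinarith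
  have hr : 0 < D / (3 * M) := by positivity
  refine le_trans (one_div_57_mul_pow_three_le hM hr ?_)
    (le_D1_of_mul_norm_sq_le hH h0 h1 hM2 hM3 hη (by positivity) hqη.le hr ξ)
  field_simp
end
end

section
/- Let H : ℝ³ × ℝᵖ → ℂ be C^{3,1} with H(0,0) = 0, ∇_η H(0,ξ) existing, H(0,ξ) = 0 for all ξ, and ‖H‖_{3,0} := sup_ξ ‖H(·,ξ)‖₃ < ∞. Suppose moreover D₁(H,ξ) ≤ ‖H‖_{3,0}/2, where D₁(H,ξ) = sup_{η≠0} |H(η,ξ)|/(‖η‖² + ‖ξ‖²). Define α(ξ) = ‖∇_η H(0,ξ)‖/(‖ξ‖ √(1 + ‖ξ‖²)). Then α(ξ)² ≤ 8 ‖H‖_{3,0} D₁(H,ξ). -/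
/-! Put `f = H(·, ξ)`, `φ = f'(0)`, `N = ‖H‖_{3,0}` and `D = D₁(H, ξ)`. Taylor's theorem gives
`‖f η - φ η‖ ≤ N ‖η‖²`, and the definition of `D` gives `‖f η‖ ≤ D (‖η‖² + ‖ξ‖²)`. Along `η = t u`
with `‖u‖ = 1` this yields `t ‖φ u‖ - N t² ≤ D (t² + ‖ξ‖²)`; at `t = ‖φ u‖ / (2N)`, using
`D ≤ N / 2`, it becomes `‖φ u‖² ≤ 8 N D ‖ξ‖²`. Hence `‖φ‖² ≤ 8 N D ‖ξ‖²`, and dividing by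
`‖ξ‖² (1 + ‖ξ‖²) ≥ ‖ξ‖²` bounds `α(ξ)²`. -/

noncomputable section
open scoped BigOperators

variable {p : ℕ}

/-- `‖H‖_{3,0}`: supremum over `ξ` of the `C³`-norm of the slice `H(·, ξ)`. -/
def norm30 (H : E3 → EuclideanSpace ℝ (Fin p) → ℂ) : ℝ :=
  ⨆ t : EuclideanSpace ℝ (Fin p) × Fin 4 × E3,
    ‖iteratedFDeriv ℝ (t.2.1 : ℕ) (fun η => H η t.1) t.2.2‖

/-- `D₁(H, ξ)` for the two-variable function. -/
def D1p (H : E3 → EuclideanSpace ℝ (Fin p) → ℂ) (ξ : EuclideanSpace ℝ (Fin p)) : ℝ :=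
  ⨆ η : {η : E3 // η ≠ 0}, ‖H (η : E3) ξ‖ / (‖(η : E3)‖ ^ 2 + ‖ξ‖ ^ 2)

/-- `α(ξ) = ‖∇_η H(0, ξ)‖ / (‖ξ‖ √(1 + ‖ξ‖²))`. -/
def alpha (H : E3 → EuclideanSpace ℝ (Fin p) → ℂ) (ξ : EuclideanSpace ℝ (Fin p)) : ℝ :=
  ‖fderiv ℝ (fun η => H η ξ) 0‖ / (‖ξ‖ * Real.sqrt (1 + ‖ξ‖ ^ 2))

open Metric

section

variable {E F : Type*} [NormedAddCommGroup E] [NormedSpace ℝ E]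
  [NormedAddCommGroup F] [NormedSpace ℝ F]

theorem norm_sub_sub_fderiv_le_of_norm_fderiv_fderiv_le {f : E → F} {C : ℝ}
    (hf : ContDiff ℝ 2 f) (hC : ∀ x, ‖fderiv ℝ (fderiv ℝ f) x‖ ≤ C) (x : E) :
    ‖f x - f 0 - fderiv ℝ f 0 x‖ ≤ C * ‖x‖ ^ 2 := by
  have hf' : Differentiable ℝ (fderiv ℝ f) := (hf.fderiv_right le_rfl).differentiable one_ne_zero
  have hlip (y : E) : ‖fderiv ℝ f y - fderiv ℝ f 0‖ ≤ C * ‖y‖ := by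
    simpa using convex_univ.norm_image_sub_le_of_norm_fderiv_le (fun y _ ↦ hf' y) (fun y _ ↦ hC y)
      (Set.mem_univ 0) (Set.mem_univ y)
  have hC0 : 0 ≤ C := (norm_nonneg (fderiv ℝ (fderiv ℝ f) 0)).trans (hC 0)
  have hbound : ∀ y ∈ closedBall (0 : E) ‖x‖, ‖fderiv ℝ f y - fderiv ℝ f 0‖ ≤ C * ‖x‖ :=
    fun y hy ↦ (hlip y).trans (by gcongr; simpa using hy)
  have := (convex_closedBall (0 : E) ‖x‖).norm_image_sub_le_of_norm_fderiv_le'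
    (fun y _ ↦ hf.differentiable two_ne_zero y) hbound (mem_closedBall_self (norm_nonneg x))
    (mem_closedBall_zero_iff.2 le_rfl)
  simpa [sq, mul_assoc] using this

theorem sq_le_of_forall_pos_mul_sub_le {a N D s : ℝ} (ha : 0 ≤ a) (hD : 0 ≤ D)
    (hDN : D ≤ N / 2) (h : ∀ t > 0, t * a - N * t ^ 2 ≤ D * (t ^ 2 + s ^ 2)) :
    a ^ 2 ≤ 8 * N * D * s ^ 2 := by
  rcases ha.eq_or_lt with rfl | ha
  · have : 0 ≤ N := by linarith
    rw [zero_pow two_ne_zero]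
    positivity
  have hN : 0 < N := by
    by_contra! hN
    nlinarith [h 1 one_pos]
  have key := h (a / (2 * N)) (by positivity)
  have hDt : D * (a / (2 * N)) ^ 2 ≤ N / 2 * (a / (2 * N)) ^ 2 := by gcongr
  have hval : a / (2 * N) * a - N * (a / (2 * N)) ^ 2 - N / 2 * (a / (2 * N)) ^ 2
      = a ^ 2 / (8 * N) := by
    field_simp
    ring
  have : a ^ 2 / (8 * N) ≤ D * s ^ 2 := by linarith
  rw [div_le_iff₀ (by positivity)] at this
  linarith

theorem sq_opNorm_le_of_norm_sub_le {φ : E →L[ℝ] F} {f : E → F} {N D s : ℝ} (hD : 0 ≤ D)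
    (hDN : D ≤ N / 2) (happrox : ∀ x, ‖f x - φ x‖ ≤ N * ‖x‖ ^ 2)
    (hf : ∀ x ≠ 0, ‖f x‖ ≤ D * (‖x‖ ^ 2 + s ^ 2)) :
    ‖φ‖ ^ 2 ≤ 8 * N * D * s ^ 2 := by
  have hunit (u : E) (hu : ‖u‖ = 1) : ‖φ u‖ ^ 2 ≤ 8 * N * D * s ^ 2 := by
    refine sq_le_of_forall_pos_mul_sub_le (norm_nonneg _) hD hDN fun t ht ↦ ?_
    have hnorm : ‖t • u‖ = t := by rw [norm_smul, hu, Real.norm_of_nonneg ht.le, mul_one]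
    have hφ : t * ‖φ u‖ ≤ ‖f (t • u)‖ + ‖f (t • u) - φ (t • u)‖ := calc
      t * ‖φ u‖ = ‖φ (t • u)‖ := by rw [map_smul, norm_smul, Real.norm_of_nonneg ht.le]
      _ ≤ _ := norm_le_norm_add_norm_sub _ _
    have hupper := hf (t • u) (by rw [← norm_ne_zero_iff, hnorm]; exact ht.ne')
    have hremainder := happrox (t • u)
    rw [hnorm] at hupper hremainder
    linarith
  have hM : 0 ≤ 8 * N * D * s ^ 2 := by
    have : 0 ≤ N := by linarith
    positivity
  have := φ.opNorm_le_of_unit_norm (Real.sqrt_nonneg _) fun u hu ↦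
    (Real.le_sqrt (norm_nonneg _) hM).2 (hunit u hu)
  exact (Real.le_sqrt (norm_nonneg _) hM).1 this

end

theorem sq_div_mul_sqrt_one_add_sq_le {L K s : ℝ} (hK : 0 ≤ K) (h : L ^ 2 ≤ K * s ^ 2) :
    (L / (s * √(1 + s ^ 2))) ^ 2 ≤ K := by
  rw [div_pow, mul_pow, Real.sq_sqrt (by positivity)]
  rcases eq_or_ne s 0 with rfl | hs
  · simpa using hK
  rw [div_le_iff₀ (by positivity)]
  nlinarith [mul_nonneg hK (pow_nonneg (sq_nonneg s) 2)]

theorem D1p_nonneg (H : E3 → EuclideanSpace ℝ (Fin p) → ℂ) (ξ : EuclideanSpace ℝ (Fin p)) :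
    0 ≤ D1p H ξ :=
  Real.iSup_nonneg fun _ ↦ by positivity

theorem norm_le_D1p_mul {H : E3 → EuclideanSpace ℝ (Fin p) → ℂ} {ξ : EuclideanSpace ℝ (Fin p)}
    {C : ℝ} (hξ : ξ ≠ 0) (hC : ∀ η, ‖H η ξ‖ ≤ C * ‖η‖) {η : E3} (hη : η ≠ 0) :
    ‖H η ξ‖ ≤ D1p H ξ * (‖η‖ ^ 2 + ‖ξ‖ ^ 2) := by
  have hξ' : 0 < ‖ξ‖ := norm_pos_iff.2 hξ
  -- `2 ‖ξ‖ ‖η‖ ≤ ‖η‖² + ‖ξ‖²` bounds every quotient in `D1p` by `C / (2 ‖ξ‖)`.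
  have hbdd : BddAbove (Set.range fun η : {η : E3 // η ≠ 0} ↦
      ‖H (η : E3) ξ‖ / (‖(η : E3)‖ ^ 2 + ‖ξ‖ ^ 2)) := by
    refine ⟨C / (2 * ‖ξ‖), ?_⟩
    rintro _ ⟨⟨η, hη⟩, rfl⟩
    have hη' : 0 < ‖η‖ := norm_pos_iff.2 hη
    have hC0 : 0 ≤ C := by nlinarith [norm_nonneg (H η ξ), hC η]
    rw [div_le_div_iff₀ (by positivity) (by positivity)]
    nlinarith [hC η, mul_nonneg hC0 (sq_nonneg (‖η‖ - ‖ξ‖))]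
  have : ‖H η ξ‖ / (‖η‖ ^ 2 + ‖ξ‖ ^ 2) ≤ D1p H ξ := le_ciSup hbdd ⟨η, hη⟩
  rwa [div_le_iff₀ (by positivity)] at this

theorem alpha_sq_bound_general (H : E3 → EuclideanSpace ℝ (Fin p) → ℂ)
    (hH : ∀ ξ, ContDiff ℝ 3 (fun η => H η ξ))
    (h0ξ : ∀ ξ, H 0 ξ = 0)
    (hb : BddAbove (Set.range fun t : EuclideanSpace ℝ (Fin p) × Fin 4 × E3 =>
      ‖iteratedFDeriv ℝ (t.2.1 : ℕ) (fun η => H η t.1) t.2.2‖))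
    (ξ : EuclideanSpace ℝ (Fin p))
    (hD : D1p H ξ ≤ norm30 H / 2) :
    (alpha H ξ) ^ 2 ≤ 8 * norm30 H * D1p H ξ := by
  set f : E3 → ℂ := fun η => H η ξ
  have hN (k : Fin 4) (x : E3) : ‖iteratedFDeriv ℝ k f x‖ ≤ norm30 H := le_ciSup hb (ξ, k, x)
  have hK : 0 ≤ 8 * norm30 H * D1p H ξ :=
    mul_nonneg (mul_nonneg (by norm_num) ((norm_nonneg _).trans (hN 0 0))) (D1p_nonneg H ξ)
  rcases eq_or_ne ξ 0 with rfl | hξ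
  · simpa [alpha] using hK -- `alpha H 0 = 0` by division by zero
  have hf : ContDiff ℝ 2 f := (hH ξ).of_le (by norm_num)
  have hf0 : f 0 = 0 := h0ξ ξ
  have hlin (η : E3) : ‖f η‖ ≤ norm30 H * ‖η‖ := by
    simpa [hf0] using convex_univ.norm_image_sub_le_of_norm_fderiv_le
      (fun x _ ↦ hf.differentiable two_ne_zero x) (fun x _ ↦ by simpa using hN 1 x)
      (Set.mem_univ 0) (Set.mem_univ η)
  have hfderiv2 (x : E3) : ‖fderiv ℝ (fderiv ℝ f) x‖ ≤ norm30 H := by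
    rw [← norm_iteratedFDeriv_one, norm_iteratedFDeriv_fderiv]
    exact hN 2 x
  have htaylor (η : E3) : ‖f η - fderiv ℝ f 0 η‖ ≤ norm30 H * ‖η‖ ^ 2 := by
    simpa [hf0] using norm_sub_sub_fderiv_le_of_norm_fderiv_fderiv_le hf hfderiv2 η
  have hφ := sq_opNorm_le_of_norm_sub_le (D1p_nonneg H ξ) hD htaylor
    fun η hη ↦ norm_le_D1p_mul hξ hlin hη
  exact sq_div_mul_sqrt_one_add_sq_le hK hφ

theorem alpha_sq_bound (H : E3 → EuclideanSpace ℝ (Fin p) → ℂ)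
    (hH : ∀ ξ, ContDiff ℝ 3 (fun η => H η ξ))
    (hH2 : ∀ η, ContDiff ℝ 1 (fun ξ => H η ξ))
    (h00 : H 0 0 = 0)
    (h0ξ : ∀ ξ, H 0 ξ = 0)
    (hb : BddAbove (Set.range fun t : EuclideanSpace ℝ (Fin p) × Fin 4 × E3 =>
      ‖iteratedFDeriv ℝ (t.2.1 : ℕ) (fun η => H η t.1) t.2.2‖))
    (ξ : EuclideanSpace ℝ (Fin p))
    (hD : D1p H ξ ≤ norm30 H / 2) :
    (alpha H ξ) ^ 2 ≤ 8 * norm30 H * D1p H ξ :=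
  alpha_sq_bound_general H hH h0ξ hb ξ hD
end
end

section
/- Let f, g be probability distributions on ℝ⁶ with equal (zero) first moments and finite second moments, and let R be the Kac collision operator R[f](v₁,v₂) = ∫_{S²} f(v₁ − ((v₁−v₂)·ω)ω, v₂ − ((v₂−v₁)·ω)ω) dω with dω the normalized measure on S². Then d₂(R[f], R[g]) ≤ d₂(f, g), where d₂(f,g) = sup_{ξ≠0} |f̂(ξ) − ĝ(ξ)|/‖ξ‖² is the Gabetta–Toscani–Wennberg distance. -/
noncomputable section
open MeasureTheory

/-- `ℝ⁶` viewed as two `ℝ³` blocks. -/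
abbrev V6 := EuclideanSpace ℝ (Fin 2 × Fin 3)

def sphereMeasure : Measure (Metric.sphere (0 : E3) 1) :=
  (volume : Measure E3).toSphere

def blk (v : V6) (i : Fin 2) : E3 := WithLp.toLp 2 (fun j => v (i, j))

/-- post-collisional velocity pair given direction `ω`. -/
def collide (v : V6) (ω : E3) : V6 := WithLp.toLp 2 fun p : Fin 2 × Fin 3 =>
  if p.1 = 0 then (blk v 0 - (inner ℝ (blk v 0 - blk v 1) ω : ℝ) • ω) p.2
  else (blk v 1 - (inner ℝ (blk v 1 - blk v 0) ω : ℝ) • ω) p.2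

/-- The Kac collision operator `R` on distributions on `ℝ⁶`
(average over the normalized uniform measure on `S²`). -/
def Rop (f : V6 → ℝ) (v : V6) : ℝ :=
  ⨍ ω : Metric.sphere (0 : E3) 1, f (collide v (ω : E3)) ∂sphereMeasure

/-- The GTW distance `d₂`. -/
def d2 (f g : V6 → ℝ) : ℝ :=
  ⨆ ξ : {ξ : V6 // ξ ≠ 0},
    ‖(FourierTransform.fourier (fun v : V6 => (f v : ℂ)) : V6 → ℂ) (ξ : V6) -
      (FourierTransform.fourier (fun v : V6 => (g v : ℂ)) : V6 → ℂ) (ξ : V6)‖ / ‖(ξ : V6)‖ ^ 2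

/-! For each direction `ω` the collision map is the reflection of `ℝ⁶` in the hyperplane
orthogonal to `(ω, -ω)`, a linear isometry. Hence, by Fubini, the Fourier transform of `R[f]`
at `ξ` is the average over `ω` of `f̂` at the reflected frequency `ξ*(ω)`, which has the same
norm as `ξ`; bounding each `|f̂ - ĝ|(ξ*(ω))` by `d₂(f, g) ‖ξ‖²` gives the contraction.

The supremum defining `d₂(f, g)` has to be finite for this (an unbounded `⨆` is `0` in Lean).
It is: equal masses and first moments cancel the first two terms of the Taylor expansion of the
character `e^{-2πi⟨v, ξ⟩}`, and the remainder is `O(‖v‖² ‖ξ‖²)`, integrable against `|f - g|`. -/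

open Real Complex
open scoped RealInnerProductSpace FourierTransform

lemma norm_exp_mul_I_sub_one_sub_le (θ : ℝ) :
    ‖exp (θ * I) - 1 - θ * I‖ ≤ 2 * θ ^ 2 := by
  have hθ : ‖(θ : ℂ) * I‖ = |θ| := by simp
  rcases le_or_gt |θ| 1 with hle | hgt
  · have := norm_exp_sub_one_sub_id_le (x := θ * I) (by rwa [hθ])
    rw [hθ, sq_abs] at this
    linarith [sq_nonneg θ]
  · calc ‖exp (θ * I) - 1 - θ * I‖ ≤ ‖exp (I * θ) - 1‖ + ‖(θ : ℂ) * I‖ := by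
          rw [mul_comm (θ : ℂ) I]; exact norm_sub_le _ _
      _ ≤ |θ| + |θ| := by rw [hθ]; gcongr; exact norm_exp_I_mul_ofReal_sub_one_le
      _ ≤ 2 * θ ^ 2 := by nlinarith [sq_abs θ]

lemma norm_fourierChar_neg_sub_one_add_le (t : ℝ) :
    ‖(𝐞 (-t) : ℂ) - 1 + 2 * π * t * I‖ ≤ 8 * π ^ 2 * t ^ 2 := by
  rw [fourierChar_apply, show 2 * π * -t = -(2 * π * t) by ring]
  calc _ = ‖exp (↑(-(2 * π * t)) * I) - 1 - ↑(-(2 * π * t)) * I‖ := by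
        congr 1; push_cast; ring
    _ ≤ _ := norm_exp_mul_I_sub_one_sub_le _
    _ = _ := by ring

section Moments

variable {E : Type*} [NormedAddCommGroup E] [InnerProductSpace ℝ E] [FiniteDimensional ℝ E]
  [MeasurableSpace E] [BorelSpace E]

lemma integrable_smul_id_of_sq_mul {μ : Measure E} {h : E → ℝ} (hi : Integrable h μ)
    (h2 : Integrable (fun v => ‖v‖ ^ 2 * h v) μ) : Integrable (fun v => h v • v) μ := by
  refine (hi.norm.add h2.norm).mono' (hi.1.smul aestronglyMeasurable_id) (ae_of_all _ fun v => ?_)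
  rw [Pi.add_apply, norm_smul, norm_mul, norm_pow, norm_norm]
  nlinarith [norm_nonneg (h v), norm_nonneg v, mul_nonneg (norm_nonneg (h v)) (sq_nonneg (‖v‖ - 1))]

lemma fourier_ofReal_sub {f g : E → ℝ} (hf : Integrable f) (hg : Integrable g) (ξ : E) :
    𝓕 (fun v => (f v : ℂ)) ξ - 𝓕 (fun v => (g v : ℂ)) ξ = 𝓕 (fun v => ((f v - g v : ℝ) : ℂ)) ξ := by
  simp only [Real.fourier_eq, ofReal_sub, smul_sub]
  exact (integral_sub ((Real.fourierIntegral_convergent_iff ξ).2 hf.ofReal)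
    ((Real.fourierIntegral_convergent_iff ξ).2 hg.ofReal)).symm

theorem fourier_eq_integral_fourierChar_sub_one_add_mul {h : E → ℝ} (hi : Integrable h)
    (h2 : Integrable fun v => ‖v‖ ^ 2 * h v) (h0 : ∫ v, h v = 0) (h1 : ∫ v, h v • v = 0)
    (ξ : E) :
    𝓕 (fun v => (h v : ℂ)) ξ = ∫ v, ((𝐞 (-⟪v, ξ⟫) : ℂ) - 1 + 2 * π * ⟪v, ξ⟫ * I) * h v := by
  have hsmul := integrable_smul_id_of_sq_mul hi h2
  have hinner : ∀ v, ⟪v, ξ⟫ * h v = ⟪ξ, h v • v⟫ := fun v => by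
    rw [real_inner_smul_right, real_inner_comm, mul_comm]
  have hC : Integrable fun v => (h v : ℂ) := hi.ofReal
  have hlinC : Integrable fun v => ((⟪v, ξ⟫ * h v : ℝ) : ℂ) := by
    simp_rw [hinner]
    exact ((innerSL ℝ ξ).integrable_comp hsmul).ofReal
  have hlin : Integrable fun v => (h v : ℂ) - 2 * π * I * ((⟪v, ξ⟫ * h v : ℝ) : ℂ) :=
    hC.sub (hlinC.const_mul _)
  have hsplit : ∀ v, 𝐞 (-⟪v, ξ⟫) • (h v : ℂ) = ((𝐞 (-⟪v, ξ⟫) : ℂ) - 1 + 2 * π * ⟪v, ξ⟫ * I) * h v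
      + ((h v : ℂ) - 2 * π * I * ((⟪v, ξ⟫ * h v : ℝ) : ℂ)) := fun v => by
    rw [Circle.smul_def, smul_eq_mul]
    push_cast
    ring
  have hrem : Integrable fun v => ((𝐞 (-⟪v, ξ⟫) : ℂ) - 1 + 2 * π * ⟪v, ξ⟫ * I) * h v :=
    (((Real.fourierIntegral_convergent_iff ξ).2 hC).sub hlin).congr
      (ae_of_all _ fun v => by rw [Pi.sub_apply, hsplit v, add_sub_cancel_right])
  rw [Real.fourier_eq]
  simp_rw [hsplit]
  rw [integral_add hrem hlin, integral_sub hC (hlinC.const_mul _), integral_const_mul,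
    integral_complex_ofReal, integral_complex_ofReal, h0]
  simp_rw [hinner]
  rw [integral_inner hsmul, h1, inner_zero_right]
  simp

theorem norm_fourier_le_of_moments_eq_zero {h : E → ℝ}
    (hi : Integrable h) (h2 : Integrable fun v => ‖v‖ ^ 2 * h v) (h0 : ∫ v, h v = 0)
    (h1 : ∫ v, h v • v = 0) (ξ : E) :
    ‖𝓕 (fun v => (h v : ℂ)) ξ‖ ≤ 8 * π ^ 2 * (∫ v, ‖v‖ ^ 2 * |h v|) * ‖ξ‖ ^ 2 := by
  have hbound : Integrable fun v => 8 * π ^ 2 * ‖ξ‖ ^ 2 * (‖v‖ ^ 2 * |h v|) := by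
    refine (h2.abs.const_mul (8 * π ^ 2 * ‖ξ‖ ^ 2)).congr (ae_of_all _ fun v => ?_)
    simp [abs_mul]
  rw [fourier_eq_integral_fourierChar_sub_one_add_mul hi h2 h0 h1]
  refine (norm_integral_le_of_norm_le hbound (ae_of_all _ fun v => ?_)).trans_eq ?_
  · have hsq : ⟪v, ξ⟫ ^ 2 ≤ ‖v‖ ^ 2 * ‖ξ‖ ^ 2 := by
      rw [← mul_pow, ← sq_abs]
      exact pow_le_pow_left₀ (abs_nonneg _) (abs_real_inner_le_norm v ξ) 2
    rw [norm_mul, norm_real, Real.norm_eq_abs]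
    calc _ ≤ 8 * π ^ 2 * ⟪v, ξ⟫ ^ 2 * |h v| := by
          gcongr; exact norm_fourierChar_neg_sub_one_add_le _
      _ ≤ 8 * π ^ 2 * (‖v‖ ^ 2 * ‖ξ‖ ^ 2) * |h v| := by gcongr
      _ = _ := by ring
  · rw [integral_const_mul]
    ring

theorem norm_fourier_sub_le_of_moments_eq {f g : E → ℝ} (hf : Integrable f) (hg : Integrable g)
    (hf2 : Integrable fun v => ‖v‖ ^ 2 * f v) (hg2 : Integrable fun v => ‖v‖ ^ 2 * g v)
    (h0 : ∫ v, f v = ∫ v, g v) (h1 : ∫ v, f v • v = ∫ v, g v • v) (ξ : E) :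
    ‖𝓕 (fun v => (f v : ℂ)) ξ - 𝓕 (fun v => (g v : ℂ)) ξ‖
      ≤ 8 * π ^ 2 * (∫ v, ‖v‖ ^ 2 * |f v - g v|) * ‖ξ‖ ^ 2 := by
  rw [fourier_ofReal_sub hf hg]
  refine norm_fourier_le_of_moments_eq_zero (h := fun v => f v - g v) (hf.sub hg) ?_ ?_ ?_ ξ
  · exact (hf2.sub hg2).congr (ae_of_all _ fun v => (mul_sub _ _ _).symm)
  · rw [integral_sub hf hg, h0, sub_self]
  · simp_rw [sub_smul]
    rw [integral_sub (integrable_smul_id_of_sq_mul hf hf2) (integrable_smul_id_of_sq_mul hg hg2),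
      h1, sub_self]

end Moments

section IsometryAverage

variable {E F Ω : Type*} [NormedAddCommGroup E] [InnerProductSpace ℝ E] [FiniteDimensional ℝ E]
  [MeasurableSpace E] [BorelSpace E] [NormedAddCommGroup F] [NormedSpace ℂ F]
  [MeasurableSpace Ω] {μ : Measure Ω} [IsFiniteMeasure μ] {T : Ω → E ≃ₗᵢ[ℝ] E} {f : E → F}

lemma integral_fourierChar_smul_comp_linearIsometry (A : E ≃ₗᵢ[ℝ] E) (f : E → F) (ξ : E) :
    ∫ v, 𝐞 (-⟪v, ξ⟫) • f (A v) = 𝓕 f (A ξ) := by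
  rw [← Real.fourier_comp_linearIsometry, Real.fourier_eq]
  rfl

lemma integrable_fourierChar_smul_comp (hT : Measurable fun p : Ω × E => T p.1 p.2)
    (hf : Integrable f) (ξ : E) :
    Integrable (fun p : Ω × E => 𝐞 (-⟪p.2, ξ⟫) • f (T p.1 p.2)) (μ.prod volume) := by
  have hΨ : MeasurePreserving (fun p : Ω × E => (p.1, T p.1 p.2)) (μ.prod volume) (μ.prod volume) :=
    (MeasurePreserving.id μ).skew_product hT (ae_of_all _ fun ω => (T ω).measurePreserving.map_eq)
  have hfT : Integrable (fun p : Ω × E => f (T p.1 p.2)) (μ.prod volume) :=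
    hΨ.integrable_comp_of_integrable (hf.comp_snd μ)
  refine hfT.mono ?_ (ae_of_all _ fun p => by rw [Circle.norm_smul])
  simp_rw [Circle.smul_def]
  exact (continuous_subtype_val.comp (Real.continuous_fourierChar.comp
    (continuous_id.inner continuous_const).neg)).aestronglyMeasurable.comp_snd.smul hfT.1

theorem fourier_integral_comp_linearIsometry (hT : Measurable fun p : Ω × E => T p.1 p.2)
    (hf : Integrable f) (ξ : E) :
    𝓕 (fun v => ∫ ω, f (T ω v) ∂μ) ξ = ∫ ω, 𝓕 f (T ω ξ) ∂μ := by
  calc 𝓕 (fun v => ∫ ω, f (T ω v) ∂μ) ξ = ∫ v, (∫ ω, 𝐞 (-⟪v, ξ⟫) • f (T ω v) ∂μ) := by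
        simp_rw [Real.fourier_eq, Circle.smul_def, integral_smul]
    _ = ∫ ω, (∫ v, 𝐞 (-⟪v, ξ⟫) • f (T ω v)) ∂μ :=
        (integral_integral_swap (f := fun ω v => 𝐞 (-⟪v, ξ⟫) • f (T ω v))
          (integrable_fourierChar_smul_comp hT hf ξ)).symm
    _ = ∫ ω, 𝓕 f (T ω ξ) ∂μ := by
        simp_rw [integral_fourierChar_smul_comp_linearIsometry]

lemma integrable_fourier_comp_linearIsometry (hT : Measurable fun p : Ω × E => T p.1 p.2)
    (hf : Integrable f) (ξ : E) : Integrable (fun ω => 𝓕 f (T ω ξ)) μ := by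
  simpa only [integral_fourierChar_smul_comp_linearIsometry] using
    (integrable_fourierChar_smul_comp hT hf ξ).integral_prod_left

end IsometryAverage

def collisionAxis : E3 →ₗ[ℝ] V6 where
  toFun ω := WithLp.toLp 2 fun p => if p.1 = 0 then ω p.2 else -ω p.2
  map_add' x y := by ext ⟨i, j⟩; fin_cases i <;> simp [add_comm]
  map_smul' c x := by ext ⟨i, j⟩; fin_cases i <;> simp

@[simp]
lemma blk_apply (v : V6) (i : Fin 2) (j : Fin 3) : blk v i j = v (i, j) := rfl

lemma inner_collisionAxis (v : V6) (ω : E3) :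
    ⟪v, collisionAxis ω⟫ = ⟪blk v 0 - blk v 1, ω⟫ := by
  simp only [PiLp.inner_apply, collisionAxis, blk, Fintype.sum_prod_type, Fin.sum_univ_two]
  simp [mul_sub, ← sub_eq_add_neg]

lemma collide_eq_sub (v : V6) (ω : E3) :
    collide v ω = v - ⟪v, collisionAxis ω⟫ • collisionAxis ω := by
  ext ⟨i, j⟩
  rw [inner_collisionAxis]
  fin_cases i <;> simp [collide, collisionAxis, inner_sub_left]
  ring

lemma norm_collisionAxis_sq (ω : E3) : ‖collisionAxis ω‖ ^ 2 = 2 * ‖ω‖ ^ 2 := by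
  have h0 : blk (collisionAxis ω) 0 = ω := by ext j; simp [blk, collisionAxis]
  have h1 : blk (collisionAxis ω) 1 = -ω := by ext j; simp [blk, collisionAxis]
  rw [← real_inner_self_eq_norm_sq, inner_collisionAxis, h0, h1, sub_neg_eq_add, inner_add_left,
    real_inner_self_eq_norm_sq]
  ring

def collisionIsometry (ω : Metric.sphere (0 : E3) 1) : V6 ≃ₗᵢ[ℝ] V6 :=
  Submodule.reflection (ℝ ∙ collisionAxis ω)ᗮ

lemma collisionIsometry_apply (ω : Metric.sphere (0 : E3) 1) (v : V6) :
    collisionIsometry ω v = collide v ω := by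
  rw [collide_eq_sub, collisionIsometry, Submodule.reflection_apply,
    Submodule.starProjection_orthogonal_val, Submodule.starProjection_singleton,
    norm_collisionAxis_sq, norm_eq_of_mem_sphere ω, real_inner_comm]
  push_cast
  module

lemma continuous_collisionIsometry :
    Continuous fun p : Metric.sphere (0 : E3) 1 × V6 => collisionIsometry p.1 p.2 := by
  simp_rw [collisionIsometry_apply, collide_eq_sub]
  have := collisionAxis.continuous_of_finiteDimensional
  fun_prop

instance : IsFiniteMeasure sphereMeasure := by
  unfold sphereMeasure; infer_instance

instance : NeZero sphereMeasure := ⟨Measure.toSphere_ne_zero _⟩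

def normalizedSphereMeasure : Measure (Metric.sphere (0 : E3) 1) :=
  (sphereMeasure Set.univ)⁻¹ • sphereMeasure

instance : IsProbabilityMeasure normalizedSphereMeasure := by
  unfold normalizedSphereMeasure; infer_instance

lemma Rop_eq_integral (f : V6 → ℝ) (v : V6) :
    Rop f v = ∫ ω, f (collisionIsometry ω v) ∂normalizedSphereMeasure := by
  simp_rw [collisionIsometry_apply]
  rfl

theorem fourier_Rop {f : V6 → ℝ} (hf : Integrable f) (ξ : V6) :
    𝓕 (fun v => (Rop f v : ℂ)) ξ
      = ∫ ω, 𝓕 (fun v => (f v : ℂ)) (collisionIsometry ω ξ) ∂normalizedSphereMeasure := by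
  simp_rw [Rop_eq_integral, ← integral_complex_ofReal]
  exact fourier_integral_comp_linearIsometry continuous_collisionIsometry.measurable
    (hf.ofReal (𝕜 := ℂ)) ξ

lemma norm_fourier_sub_le_d2_mul {f g : V6 → ℝ} {C : ℝ}
    (hC : ∀ ξ, ‖𝓕 (fun v => (f v : ℂ)) ξ - 𝓕 (fun v => (g v : ℂ)) ξ‖ ≤ C * ‖ξ‖ ^ 2) {ξ : V6}
    (hξ : ξ ≠ 0) :
    ‖𝓕 (fun v => (f v : ℂ)) ξ - 𝓕 (fun v => (g v : ℂ)) ξ‖ ≤ d2 f g * ‖ξ‖ ^ 2 := by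
  rw [← div_le_iff₀ (pow_pos (norm_pos_iff.2 hξ) 2), d2]
  refine le_ciSup (f := fun η : {ξ : V6 // ξ ≠ 0} =>
    ‖𝓕 (fun v => (f v : ℂ)) η - 𝓕 (fun v => (g v : ℂ)) η‖ / ‖(η : V6)‖ ^ 2) ?_ ⟨ξ, hξ⟩
  exact ⟨C, Set.forall_mem_range.2 fun η =>
    (div_le_iff₀ (pow_pos (norm_pos_iff.2 η.2) 2)).2 (hC η)⟩

lemma d2_le_of_forall_norm_sub_le {f g : V6 → ℝ} {D : ℝ}
    (hD : ∀ ξ ≠ 0, ‖𝓕 (fun v => (f v : ℂ)) ξ - 𝓕 (fun v => (g v : ℂ)) ξ‖ ≤ D * ‖ξ‖ ^ 2) :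
    d2 f g ≤ D := by
  have : Nonempty {ξ : V6 // ξ ≠ 0} := nonempty_subtype.2 (exists_ne 0)
  exact ciSup_le fun ξ => (div_le_iff₀ (pow_pos (norm_pos_iff.2 ξ.2) 2)).2 (hD ξ ξ.2)

theorem d2_R_contract_general (f g : V6 → ℝ)
    (hfi : Integrable f) (hgi : Integrable g)
    (hf1 : ∫ v, f v = 1) (hg1 : ∫ v, g v = 1)
    (hfm : ∫ v : V6, f v • v = 0) (hgm : ∫ v : V6, g v • v = 0)
    (hf2 : Integrable fun v : V6 => ‖v‖ ^ 2 * f v)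
    (hg2 : Integrable fun v : V6 => ‖v‖ ^ 2 * g v) :
    d2 (Rop f) (Rop g) ≤ d2 f g := by
  have hC := norm_fourier_sub_le_of_moments_eq hfi hgi hf2 hg2 (hf1.trans hg1.symm)
    (hfm.trans hgm.symm)
  have hT := continuous_collisionIsometry.measurable
  have hfC : Integrable fun v => (f v : ℂ) := hfi.ofReal
  have hgC : Integrable fun v => (g v : ℂ) := hgi.ofReal
  refine d2_le_of_forall_norm_sub_le fun ξ hξ => ?_
  rw [fourier_Rop hfi, fourier_Rop hgi, ← integral_sub
    (integrable_fourier_comp_linearIsometry hT hfC ξ)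
    (integrable_fourier_comp_linearIsometry hT hgC ξ)]
  refine (norm_integral_le_of_norm_le_const (C := d2 f g * ‖ξ‖ ^ 2)
    (ae_of_all _ fun ω => ?_)).trans_eq (by simp)
  rw [← (collisionIsometry ω).norm_map ξ]
  exact norm_fourier_sub_le_d2_mul hC ((collisionIsometry ω).map_ne_zero_iff.2 hξ)

theorem d2_R_contract (f g : V6 → ℝ)
    (hf0 : ∀ v, 0 ≤ f v) (hg0 : ∀ v, 0 ≤ g v)
    (hfi : Integrable f) (hgi : Integrable g)
    (hf1 : ∫ v, f v = 1) (hg1 : ∫ v, g v = 1)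
    (hfm : ∫ v : V6, f v • v = 0) (hgm : ∫ v : V6, g v • v = 0)
    (hf2 : Integrable fun v : V6 => ‖v‖ ^ 2 * f v)
    (hg2 : Integrable fun v : V6 => ‖v‖ ^ 2 * g v) :
    d2 (Rop f) (Rop g) ≤ d2 f g :=
  d2_R_contract_general f g hfi hgi hf1 hg1 hfm hgm hf2 hg2
end
end

section
/- Fixed-momentum rotational average contraction: let N ≥ 1, k < N, and let O range over the subgroup 𝒪 of SO(3N) (acting on ℝ^{3N} = (ℝ³)^N) fixing the three vectors E_i = (e_i,...,e_i), with normalized Haar measure. For any η ∈ ℝ^{3N}, ∫_𝒪 ‖(Oη)^{≤k}‖² dσ(O) = (k/N)‖η‖², where (x)^{≤k} denotes the projection onto the first k blocks of ℝ³. (This uses that for any two coordinate indices i, j in {1,...,3N} corresponding to the same direction, ∫_𝒪 (Oη)_i² dσ(O) = ∫_𝒪 (Oη)_j² dσ(O).) -/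
noncomputable section
open MeasureTheory Matrix

/-- The vectors `E_i = (e_i, …, e_i) ∈ ℝ^{3N}`, for `i = 1,2,3`. -/
def Evec (N : ℕ) (i : Fin 3) : (Fin N × Fin 3) → ℝ := fun p => if p.2 = i then 1 else 0

/-- The subgroup `𝒪` of `SO(3N)` of special orthogonal matrices fixing `E₁, E₂, E₃`,
as a submonoid (it is closed under inverses since its elements are orthogonal). -/
def fixSub (N : ℕ) : Submonoid (Matrix (Fin N × Fin 3) (Fin N × Fin 3) ℝ) where
  carrier := {O | O ∈ Matrix.specialOrthogonalGroup (Fin N × Fin 3) ℝ ∧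
    ∀ i, O.mulVec (Evec N i) = Evec N i}
  one_mem' := ⟨Submonoid.one_mem _, fun i => by simp⟩
  mul_mem' := by
    rintro a b ⟨ha, ha'⟩ ⟨hb, hb'⟩
    refine ⟨Submonoid.mul_mem _ ha hb, fun i => ?_⟩
    rw [← Matrix.mulVec_mulVec, hb' i, ha' i]

instance (N : ℕ) : MeasurableSpace (Matrix (Fin N × Fin 3) (Fin N × Fin 3) ℝ) :=
  inferInstanceAs (MeasurableSpace ((Fin N × Fin 3) → (Fin N × Fin 3) → ℝ))

/-
Average the squared coordinates: `F p = ∫ (Oη)_p² dμ`. Summing over all `p` gives `‖η‖²`, since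
every `O` is orthogonal. Left invariance of `μ` makes `F` invariant under every permutation matrix
in `𝒪`, and the permutation exchanging blocks `n` and `m` in two of the three directions lies in
`𝒪`, so `F (n, j) = F (m, j)`. Hence each block carries `‖η‖² / N`, and the first `k` blocks carry
`k / N · ‖η‖²`.
-/

instance (N : ℕ) : BorelSpace (Matrix (Fin N × Fin 3) (Fin N × Fin 3) ℝ) :=
  inferInstanceAs (BorelSpace ((Fin N × Fin 3) → (Fin N × Fin 3) → ℝ))

theorem MeasureTheory.integral_mul_left_eq_self_of_aestronglyMeasurable {G E : Type*}
    [MeasurableSpace G] [Mul G] [MeasurableMul G] [NormedAddCommGroup E] [NormedSpace ℝ E]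
    (μ : Measure G) [μ.IsMulLeftInvariant] (g : G) {f : G → E} (hf : AEStronglyMeasurable f μ) :
    ∫ x, f (g * x) ∂μ = ∫ x, f x ∂μ := by
  rw [← integral_map (measurable_const_mul g).aemeasurable (by rwa [map_mul_left_eq_self]),
    map_mul_left_eq_self]

namespace Matrix

variable {ι : Type*} [Fintype ι] [DecidableEq ι]

theorem sum_sq_mulVec_of_mem_orthogonalGroup {O : Matrix ι ι ℝ} (hO : O ∈ orthogonalGroup ι ℝ)
    (v : ι → ℝ) : ∑ i, (O *ᵥ v) i ^ 2 = ∑ i, v i ^ 2 := by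
  have hOO : Oᵀ * O = 1 := (mem_orthogonalGroup_iff' ι ℝ).1 hO
  have : O *ᵥ v ⬝ᵥ O *ᵥ v = v ⬝ᵥ v := by
    rw [dotProduct_mulVec, ← mulVec_transpose, mulVec_mulVec, hOO, one_mulVec]
  simpa [dotProduct, sq] using this

theorem permMatrix_mem_orthogonalGroup (σ : Equiv.Perm ι) :
    σ.permMatrix ℝ ∈ orthogonalGroup ι ℝ := by
  rw [mem_orthogonalGroup_iff', transpose_permMatrix,
    ← permMatrix_mul, mul_inv_cancel, permMatrix_one]

end Matrix

section BlockSwap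

variable {α β : Type*} [DecidableEq α] [DecidableEq β]

-- Exchanging blocks `n` and `m` in a single direction has determinant `-1`; doing it in two
-- directions gives an element of `SO` that still fixes every `E_i`.
def doubleBlockSwap (n m : α) (j j' : β) : Equiv.Perm (α × β) :=
  Equiv.swap (n, j) (m, j) * Equiv.swap (n, j') (m, j')

theorem snd_doubleBlockSwap (n m : α) (j j' : β) (p : α × β) :
    (doubleBlockSwap n m j j' p).2 = p.2 := by
  simp only [doubleBlockSwap, Equiv.Perm.mul_apply, Equiv.swap_apply_def]
  split_ifs <;> simp_all

theorem doubleBlockSwap_apply_left (n m : α) {j j' : β} (h : j ≠ j') :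
    doubleBlockSwap n m j j' (n, j) = (m, j) := by
  simp [doubleBlockSwap, Equiv.swap_apply_of_ne_of_ne, h]

theorem sign_doubleBlockSwap [Fintype α] [Fintype β] {n m : α} (h : n ≠ m) (j j' : β) :
    Equiv.Perm.sign (doubleBlockSwap n m j j') = 1 := by
  simp [doubleBlockSwap, h]

end BlockSwap

theorem sum_filter_fst_lt_eq_div_mul_sum {β : Type*} [Fintype β] {N k : ℕ} (hk : k ≤ N)
    {f : Fin N × β → ℝ} (hf : ∀ n m b, f (n, b) = f (m, b)) :
    ∑ p with (p.1 : ℕ) < k, f p = k / N * ∑ p, f p := by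
  rcases Nat.eq_zero_or_pos N with rfl | hN
  · simp
  set c := ∑ b, f (⟨0, hN⟩, b)
  have hrow : ∀ n : Fin N, ∑ b, f (n, b) = c := fun n => Finset.sum_congr rfl fun b _ => hf _ _ b
  have hlt : ∑ p with (p.1 : ℕ) < k, f p = k * c := by
    rw [← Finset.univ_product_univ, Finset.filter_product_left (fun n : Fin N => (n : ℕ) < k),
      Finset.sum_product]
    simp [hrow, Fin.card_filter_val_lt, hk]
  have htotal : ∑ p, f p = N * c := by
    simp [Fintype.sum_prod_type, hrow]
  rw [hlt, htotal]
  field_simp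

section FixSub

variable {N : ℕ}

theorem permMatrix_mem_fixSub {σ : Equiv.Perm (Fin N × Fin 3)} (hsign : Equiv.Perm.sign σ = 1)
    (hσ : ∀ p, (σ p).2 = p.2) : σ.permMatrix ℝ ∈ fixSub N := by
  refine ⟨mem_specialOrthogonalGroup_iff.2 ⟨permMatrix_mem_orthogonalGroup σ, by simp [hsign]⟩,
    fun i => ?_⟩
  ext p
  simp [permMatrix_mulVec, Evec, hσ]

theorem mem_orthogonalGroup_of_mem_fixSub (O : fixSub N) :
    (O : Matrix _ _ ℝ) ∈ orthogonalGroup (Fin N × Fin 3) ℝ :=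
  (mem_specialOrthogonalGroup_iff.1 O.2.1).1

variable (μ : Measure (fixSub N)) (η : Fin N × Fin 3 → ℝ)

def avgSqCoord (p : Fin N × Fin 3) : ℝ :=
  ∫ O : fixSub N, ((O : Matrix _ _ ℝ).mulVec η p) ^ 2 ∂μ

theorem measurable_sq_mulVec_apply (p : Fin N × Fin 3) :
    Measurable (fun O : fixSub N => ((O : Matrix _ _ ℝ).mulVec η p) ^ 2) := by
  fun_prop

theorem integrable_sq_mulVec_apply [IsFiniteMeasure μ] (p : Fin N × Fin 3) :
    Integrable (fun O : fixSub N => ((O : Matrix _ _ ℝ).mulVec η p) ^ 2) μ := by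
  refine Integrable.of_bound (measurable_sq_mulVec_apply η p).aestronglyMeasurable (∑ q, η q ^ 2)
    (Filter.Eventually.of_forall fun O => ?_)
  rw [Real.norm_of_nonneg (sq_nonneg _),
    ← sum_sq_mulVec_of_mem_orthogonalGroup (mem_orthogonalGroup_of_mem_fixSub O)]
  exact Finset.single_le_sum (fun q _ => sq_nonneg ((O : Matrix _ _ ℝ).mulVec η q))
    (Finset.mem_univ p)

theorem sum_avgSqCoord [IsProbabilityMeasure μ] : ∑ p, avgSqCoord μ η p = ∑ p, η p ^ 2 := by
  simp only [avgSqCoord]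
  rw [← integral_finsetSum _ fun p _ => integrable_sq_mulVec_apply μ η p]
  simp [sum_sq_mulVec_of_mem_orthogonalGroup (mem_orthogonalGroup_of_mem_fixSub _)]

theorem avgSqCoord_apply_perm [μ.IsMulLeftInvariant] {σ : Equiv.Perm (Fin N × Fin 3)}
    (hσ : σ.permMatrix ℝ ∈ fixSub N) (p : Fin N × Fin 3) :
    avgSqCoord μ η (σ p) = avgSqCoord μ η p :=
  calc avgSqCoord μ η (σ p)
      = ∫ O : fixSub N, (((⟨_, hσ⟩ * O : fixSub N) : Matrix _ _ ℝ).mulVec η p) ^ 2 ∂μ := by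
        simp [avgSqCoord, ← mulVec_mulVec, permMatrix_mulVec]
    _ = avgSqCoord μ η p := integral_mul_left_eq_self_of_aestronglyMeasurable μ _
      (measurable_sq_mulVec_apply η p).aestronglyMeasurable

theorem avgSqCoord_fst_eq [μ.IsMulLeftInvariant] (n m : Fin N) (j : Fin 3) :
    avgSqCoord μ η (n, j) = avgSqCoord μ η (m, j) := by
  rcases eq_or_ne n m with rfl | hnm
  · rfl
  obtain ⟨j', hj'⟩ := exists_ne j
  have hmem := permMatrix_mem_fixSub (sign_doubleBlockSwap hnm j j') (snd_doubleBlockSwap n m j j')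
  rw [← avgSqCoord_apply_perm μ η hmem, doubleBlockSwap_apply_left n m hj'.symm]

end FixSub

theorem fixed_momentum_rotational_average_general (N k : ℕ) (hk : k < N)
    (μ : Measure (fixSub N)) [IsProbabilityMeasure μ] [μ.IsMulLeftInvariant]
    (η : EuclideanSpace ℝ (Fin N × Fin 3)) :
    ∫ O : fixSub N,
        (∑ p : Fin N × Fin 3, if (p.1 : ℕ) < k then ((O : Matrix _ _ ℝ).mulVec η p) ^ 2 else 0) ∂μ
      = ((k : ℝ) / N) * ‖η‖ ^ 2 := by
  simp_rw [← Finset.sum_filter]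
  rw [integral_finsetSum _ fun p _ => integrable_sq_mulVec_apply μ η p]
  change ∑ p with (p.1 : ℕ) < k, avgSqCoord μ η p = _
  rw [sum_filter_fst_lt_eq_div_mul_sum hk.le (avgSqCoord_fst_eq μ η), sum_avgSqCoord,
    EuclideanSpace.real_norm_sq_eq]

theorem fixed_momentum_rotational_average (N k : ℕ) (hN : 1 ≤ N) (hk : k < N)
    (μ : Measure (fixSub N)) [IsProbabilityMeasure μ] [μ.IsMulLeftInvariant]
    (η : EuclideanSpace ℝ (Fin N × Fin 3)) :
    ∫ O : fixSub N,
        (∑ p : Fin N × Fin 3, if (p.1 : ℕ) < k then ((O : Matrix _ _ ℝ).mulVec η p) ^ 2 else 0) ∂μ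
      = ((k : ℝ) / N) * ‖η‖ ^ 2 :=
  fixed_momentum_rotational_average_general N k hk μ η
end
end
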